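/- arXiv:1712.06763 — 5 statements merged into one kernel-verified Lean document; each statement's English description precedes it below -/
import Mathlib

section
/- For all integers d ≥ 2, k > 1, and ℓ ≥ k+1, we have (1 - 1/k)^d + 1/ℓ^d < (1 - 1/ℓ)^d. -/
/-! For `d = 2` the inequality is a direct computation, using `1/k - 1/ℓ ≥ 1/(k(k+1))`.
It then propagates to all larger `d`: if `x, y ≤ z` and `x^n + y^n < z^n`, multiplying by `z`
gives `x^(n+1) + y^(n+1) ≤ z (x^n + y^n) < z^(n+1)`. -/

theorem pow_add_pow_lt_pow_of_le {R : Type*} [CommSemiring R] [LinearOrder R]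
    [IsStrictOrderedRing R] {x y z : R} (hx : 0 ≤ x) (hy : 0 ≤ y) (hxz : x ≤ z) (hyz : y ≤ z)
    {m n : ℕ} (hmn : m ≤ n) (h : x ^ m + y ^ m < z ^ m) : x ^ n + y ^ n < z ^ n := by
  induction n, hmn using Nat.le_induction with
  | base => exact h
  | succ n _ ih =>
    have hz : 0 < z := by
      refine (hx.trans hxz).lt_of_ne fun hz0 => ?_
      subst hz0
      have hx0 : x = 0 := le_antisymm hxz hx
      have hy0 : y = 0 := le_antisymm hyz hy
      subst hx0 hy0
      exact (lt_irrefl _ ((le_add_of_nonneg_left (pow_nonneg le_rfl n)).trans_lt ih))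
    calc x ^ (n + 1) + y ^ (n + 1) = x * x ^ n + y * y ^ n := by ring
      _ ≤ z * x ^ n + z * y ^ n := by gcongr
      _ = z * (x ^ n + y ^ n) := by ring
      _ < z * z ^ n := by gcongr
      _ = z ^ (n + 1) := by ring

theorem one_sub_one_div_sq_add_one_div_sq_lt {k ℓ : ℝ} (hk : 2 ≤ k) (hℓ : k + 1 ≤ ℓ) :
    (1 - 1 / k) ^ 2 + (1 / ℓ) ^ 2 < (1 - 1 / ℓ) ^ 2 := by
  have hk0 : 0 < k := by linarith
  have hℓk : 1 / ℓ ≤ 1 / (k + 1) := one_div_le_one_div_of_le (by linarith) hℓ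
  have hgap : 1 / k - 1 / (k + 1) = 1 / (k * (k + 1)) := by field_simp; ring
  have hsmall : (1 / k) ^ 2 < 2 / (k * (k + 1)) := by
    rw [div_pow, div_lt_div_iff₀ (by positivity) (by positivity)]
    nlinarith
  have hexpand : (1 - 1 / ℓ) ^ 2 - ((1 - 1 / k) ^ 2 + (1 / ℓ) ^ 2)
      = 2 * (1 / k - 1 / ℓ) - (1 / k) ^ 2 := by ring
  have htwice : 2 * (1 / k - 1 / ℓ) ≥ 2 / (k * (k + 1)) := by
    rw [ge_iff_le, ← mul_one_div 2, ← hgap]; linarith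
  linarith

theorem stmt_0 (d k ℓ : ℕ) (hd : 2 ≤ d) (hk : 2 ≤ k) (hℓ : k + 1 ≤ ℓ) :
    (1 - 1 / (k : ℝ)) ^ d + 1 / (ℓ : ℝ) ^ d < (1 - 1 / (ℓ : ℝ)) ^ d := by
  have hk' : (2 : ℝ) ≤ k := by exact_mod_cast hk
  have hℓ' : (k : ℝ) + 1 ≤ ℓ := by exact_mod_cast hℓ
  have hℓk : 1 / (ℓ : ℝ) ≤ 1 / k := one_div_le_one_div_of_le (by linarith) (by linarith)
  have hℓ_half : 1 / (ℓ : ℝ) ≤ 1 / 2 := one_div_le_one_div_of_le (by norm_num) (by linarith)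
  rw [← one_div_pow]
  refine pow_add_pow_lt_pow_of_le ?_ (by positivity) (by linarith) (by linarith) hd
    (one_sub_one_div_sq_add_one_div_sq_lt hk' hℓ')
  rw [sub_nonneg, div_le_one (by linarith)]
  linarith
end

section
/- Fix an integer S ≥ 2, a real ε with 0 < ε ≤ S⁻², and integers k, k' with 2 ≤ k < k' ≤ S. Define x^(k)(j) = (j-1)(1+ε)/k for 1 ≤ j < k, x^(k)(k) = 1 - (1+ε)/k, and y^(k)(j) = x^(k)(j) + (1+ε)/k. Then y^(k)(k-1) < x^(k')(k'); consequently the open intervals I^(k)(j) = (x^(k)(j), y^(k)(j)) for 1 ≤ j < k are disjoint from I^(k')(k') = (x^(k')(k'), y^(k')(k')). -/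
/-- Base point `x^(k)(j)` for `1 ≤ j ≤ k`. -/
noncomputable def xpt (ε : ℝ) (k j : ℕ) : ℝ :=
  if j < k then ((j : ℝ) - 1) * (1 + ε) / k else 1 - (1 + ε) / k

/-- Upper point `y^(k)(j) = x^(k)(j) + (1+ε)/k`. -/
noncomputable def ypt (ε : ℝ) (k j : ℕ) : ℝ := xpt ε k j + (1 + ε) / k

/-!
For `j < k` the endpoint `y^(k)(j) = j(1+ε)/k` increases with `j`, so every `I^(k)(j)` ends by
`y^(k)(k-1) = (k-1)(1+ε)/k`. Multiplied by `k k'`, the gap `x^(k')(k') - y^(k)(k-1)` becomes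
`(k' - k) - ε (k k' - (k' - k))`, which is positive once `ε k k' ≤ 1`; and `ε ≤ S⁻²` gives
`ε k k' ≤ 1` because `k < k' ≤ S`.
-/

section Points

variable {ε : ℝ} {k j : ℕ}

theorem xpt_of_lt (h : j < k) : xpt ε k j = ((j : ℝ) - 1) * (1 + ε) / k := if_pos h

theorem xpt_self : xpt ε k k = 1 - (1 + ε) / k := if_neg (lt_irrefl k)

theorem ypt_of_lt (h : j < k) : ypt ε k j = j * (1 + ε) / k := by
  rw [ypt, xpt_of_lt h]
  ring

theorem ypt_pred (hk : 1 ≤ k) : ypt ε k (k - 1) = ((k : ℝ) - 1) * (1 + ε) / k := by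
  rw [ypt_of_lt (by omega), Nat.cast_pred hk]

theorem ypt_le_ypt_pred (hε : 0 ≤ 1 + ε) (hj : j < k) : ypt ε k j ≤ ypt ε k (k - 1) := by
  rw [ypt_of_lt hj, ypt_of_lt (by omega)]
  have : (j : ℝ) ≤ (k - 1 : ℕ) := by exact_mod_cast Nat.le_sub_one_of_lt hj
  gcongr

end Points

theorem ypt_pred_lt_xpt_self {ε : ℝ} {k k' : ℕ} (hk : 1 ≤ k) (hkk' : k < k')
    (hε : ε * (k * k') ≤ 1) : ypt ε k (k - 1) < xpt ε k' k' := by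
  have hkR : (1 : ℝ) ≤ k := by exact_mod_cast hk
  have hkk'R : (k : ℝ) + 1 ≤ k' := by exact_mod_cast hkk'
  have hk0 : (0 : ℝ) < k := by linarith
  have hk'0 : (0 : ℝ) < k' := by linarith
  have hgap : xpt ε k' k' - ypt ε k (k - 1) = ((k' - k) - ε * (k * k' - (k' - k))) / (k * k') := by
    rw [xpt_self, ypt_pred hk]
    field_simp
    ring
  rw [← sub_pos, hgap]
  refine div_pos ?_ (by positivity)
  have hpos : 0 < (k : ℝ) * k' - (k' - k) := by nlinarith
  rcases le_or_gt ε 0 with hε0 | hε0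
  · nlinarith
  · nlinarith

theorem stmt_5_general (S k k' : ℕ) (ε : ℝ) (hε0 : 0 < ε) (hεS : ε ≤ 1 / (S : ℝ) ^ 2)
    (hk : 2 ≤ k) (hkk' : k < k') (hk'S : k' ≤ S) :
    ypt ε k (k - 1) < xpt ε k' k' ∧
    ∀ j : ℕ, 1 ≤ j → j < k →
      Disjoint (Set.Ioo (xpt ε k j) (ypt ε k j)) (Set.Ioo (xpt ε k' k') (ypt ε k' k')) := by
  have hkk'S : (k : ℝ) * k' ≤ (S : ℝ) ^ 2 := by
    rw [sq]
    exact_mod_cast Nat.mul_le_mul (hkk'.le.trans hk'S) hk'S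
  have hεkk' : ε * (k * k') ≤ 1 := by
    have hS : (0 : ℝ) < (S : ℝ) ^ 2 := by
      have : 0 < S := by omega
      positivity
    calc ε * (k * k') ≤ 1 / (S : ℝ) ^ 2 * (S : ℝ) ^ 2 := by gcongr
      _ = 1 := one_div_mul_cancel hS.ne'
  have hgap := ypt_pred_lt_xpt_self (by omega) hkk' hεkk'
  refine ⟨hgap, fun j _ hj => ?_⟩
  have hle := (ypt_le_ypt_pred (by linarith) hj).trans hgap.le
  exact (Set.Iic_disjoint_Ioi hle).mono
    (Set.Ioo_subset_Iio_self.trans Set.Iio_subset_Iic_self) Set.Ioo_subset_Ioi_self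

theorem stmt_5 (S k k' : ℕ) (ε : ℝ) (hS : 2 ≤ S) (hε0 : 0 < ε) (hεS : ε ≤ 1 / (S : ℝ) ^ 2)
    (hk : 2 ≤ k) (hkk' : k < k') (hk'S : k' ≤ S) :
    ypt ε k (k - 1) < xpt ε k' k' ∧
    ∀ j : ℕ, 1 ≤ j → j < k →
      Disjoint (Set.Ioo (xpt ε k j) (ypt ε k j)) (Set.Ioo (xpt ε k' k') (ypt ε k' k')) :=
  stmt_5_general S k k' ε hε0 hεS hk hkk' hk'S
end

section
/- Let d ≥ 2, k ≥ 2 and suppose L ⊆ {1,…,k}^d is a gapped language: for each coordinate i, either no word of L has value k-1 at i, or no word of L has value k at i. Let 0 < ε ≤ 1/S² for some integer S ≥ k, and let Q(w) = I^(k)(w_1) × ⋯ × I^(k)(w_d) with I^(k)(j) = (x^(k)(j), y^(k)(j)) as defined by x^(k)(j) = (j-1)(1+ε)/k for j < k, x^(k)(k) = 1 - (1+ε)/k, y^(k)(j) = x^(k)(j) + (1+ε)/k. Then for any distinct words w, w' ∈ L, the open cubes Q(w) and Q(w') are disjoint. -/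
/-- The open box `Q^(k)(w) = Π_i (x^(k)(w_i), y^(k)(w_i))`. -/
noncomputable def Qbox (d k : ℕ) (ε : ℝ) (w : Fin d → ℕ) : Set (Fin d → ℝ) :=
  Set.pi Set.univ fun i => Set.Ioo (xpt ε k (w i)) (ypt ε k (w i))

/-! Only the last interval `I(k)` is shifted to end at `1`, so it overlaps `I(k-1)` but stays
clear of `I(j)` for `j ≤ k - 2` as long as `(k - 1) ε ≤ 1`; all other consecutive intervals
merely touch. Hence in a gapped language two distinct words are separated in any coordinate
where they differ. -/

lemma sub_one_mul_le_one_of_le_one_div_sq {k S : ℕ} {ε : ℝ} (hk : 1 ≤ k) (hkS : k ≤ S)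
    (hεS : ε ≤ 1 / (S : ℝ) ^ 2) : ((k : ℝ) - 1) * ε ≤ 1 := by
  have hk' : (1 : ℝ) ≤ k := by exact_mod_cast hk
  have hkS' : (k : ℝ) ≤ S := by exact_mod_cast hkS
  have hS : (0 : ℝ) < (S : ℝ) ^ 2 := pow_pos (by linarith) 2
  calc ((k : ℝ) - 1) * ε ≤ ((k : ℝ) - 1) * (1 / (S : ℝ) ^ 2) := by gcongr
    _ = ((k : ℝ) - 1) / (S : ℝ) ^ 2 := by ring
    _ ≤ 1 := by rw [div_le_one hS]; nlinarith

lemma ypt_le_xpt {k j j' : ℕ} {ε : ℝ} (hε : 0 ≤ 1 + ε) (hkε : ((k : ℝ) - 1) * ε ≤ 1)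
    (hjj' : j < j') (hj'k : j' ≤ k) (hgap : ¬(j = k - 1 ∧ j' = k)) :
    ypt ε k j ≤ xpt ε k j' := by
  have hjk : j < k := hjj'.trans_le hj'k
  have hk : (0 : ℝ) < k := by exact_mod_cast (Nat.zero_lt_of_lt hjk)
  rw [ypt, xpt, if_pos hjk, ← add_div]
  rcases hj'k.lt_or_eq with hj'k | rfl
  · have hjj'' : (j : ℝ) + 1 ≤ j' := by exact_mod_cast hjj'
    rw [xpt, if_pos hj'k]
    gcongr
    nlinarith
  · have hj : (j : ℝ) + 2 ≤ j' := by exact_mod_cast (show j + 2 ≤ j' by omega)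
    rw [xpt, if_neg (lt_irrefl j'), le_sub_iff_add_le, ← add_div, div_le_one hk]
    nlinarith

lemma Set.Ioo_disjoint_Ioo_of_le {α : Type*} [Preorder α] {a₁ a₂ b₁ b₂ : α} (h : a₂ ≤ b₁) :
    Disjoint (Set.Ioo a₁ a₂) (Set.Ioo b₁ b₂) :=
  Set.disjoint_left.2 fun _ hx hy => lt_asymm (hx.2.trans_le h) hy.1

lemma Qbox_disjoint_of_ypt_le_xpt {d k : ℕ} {ε : ℝ} {w w' : Fin d → ℕ} (i : Fin d)
    (h : ypt ε k (w i) ≤ xpt ε k (w' i)) : Disjoint (Qbox d k ε w) (Qbox d k ε w') :=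
  Set.Disjoint.set_pi (Set.mem_univ i) (Set.Ioo_disjoint_Ioo_of_le h)

theorem stmt_11_general (d k S : ℕ) (ε : ℝ) (hk : 2 ≤ k) (hkS : k ≤ S)
    (hε0 : 0 < ε) (hεS : ε ≤ 1 / (S : ℝ) ^ 2)
    (L : Set (Fin d → ℕ))
    (hrange : ∀ w ∈ L, ∀ i, 1 ≤ w i ∧ w i ≤ k)
    (hgapped : ∀ i : Fin d, (∀ w ∈ L, w i ≠ k - 1) ∨ (∀ w ∈ L, w i ≠ k)) :
    ∀ w ∈ L, ∀ w' ∈ L, w ≠ w' → Disjoint (Qbox d k ε w) (Qbox d k ε w') := by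
  have hkε := sub_one_mul_le_one_of_le_one_div_sq (by omega) hkS hεS
  have separated : ∀ u ∈ L, ∀ v ∈ L, ∀ i, u i < v i → Disjoint (Qbox d k ε u) (Qbox d k ε v) := by
    intro u hu v hv i hlt
    refine Qbox_disjoint_of_ypt_le_xpt i (ypt_le_xpt (by linarith) hkε hlt (hrange v hv i).2 ?_)
    rintro ⟨hu', hv'⟩
    rcases hgapped i with hg | hg
    exacts [hg u hu hu', hg v hv hv']
  intro w hw w' hw' hne
  obtain ⟨i, hi⟩ := Function.ne_iff.1 hne
  rcases hi.lt_or_gt with hlt | hgt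
  · exact separated w hw w' hw' i hlt
  · exact (separated w' hw' w hw i hgt).symm

theorem stmt_11 (d k S : ℕ) (ε : ℝ) (hd : 2 ≤ d) (hk : 2 ≤ k) (hkS : k ≤ S)
    (hε0 : 0 < ε) (hεS : ε ≤ 1 / (S : ℝ) ^ 2)
    (L : Set (Fin d → ℕ))
    (hrange : ∀ w ∈ L, ∀ i, 1 ≤ w i ∧ w i ≤ k)
    (hgapped : ∀ i : Fin d, (∀ w ∈ L, w i ≠ k - 1) ∨ (∀ w ∈ L, w i ≠ k)) :
    ∀ w ∈ L, ∀ w' ∈ L, w ≠ w' → Disjoint (Qbox d k ε w) (Qbox d k ε w') :=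
  stmt_11_general d k S ε hk hkS hε0 hεS L hrange hgapped
end

section
/- Let d ≥ 2, 2 ≤ k < k' ≤ S integers, 0 < ε ≤ S⁻². Suppose L ⊆ {1,…,k}^d and L' ⊆ {1,…,k'}^d are separated: for all w ∈ L, w' ∈ L' there is i with w_i < k and w'_i = k'. Then for every w ∈ L and w' ∈ L', the open cubes Q^(k)(w) and Q^(k')(w') (defined coordinatewise as products of intervals I^(k)(w_i), resp. I^(k')(w'_i), with x^(k)(j) = (j-1)(1+ε)/k for j < k, x^(k)(k) = 1-(1+ε)/k, y^(k)(j) = x^(k)(j)+(1+ε)/k) are disjoint. -/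
theorem stmt_12 (d k k' S : ℕ) (ε : ℝ) (hd : 2 ≤ d) (hk : 2 ≤ k) (hkk' : k < k') (hk'S : k' ≤ S)
    (hε0 : 0 < ε) (hεS : ε ≤ 1 / (S : ℝ) ^ 2)
    (L : Set (Fin d → ℕ)) (L' : Set (Fin d → ℕ))
    (hrange : ∀ w ∈ L, ∀ i, 1 ≤ w i ∧ w i ≤ k)
    (hrange' : ∀ w' ∈ L', ∀ i, 1 ≤ w' i ∧ w' i ≤ k')
    (hsep : ∀ w ∈ L, ∀ w' ∈ L', ∃ i : Fin d, w i < k ∧ w' i = k') :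
    ∀ w ∈ L, ∀ w' ∈ L', Disjoint (Qbox d k ε w) (Qbox d k' ε w') := by
  intro w hw w' hw'
  obtain ⟨i, hwi, hw'i⟩ := hsep w hw w' hw'
  rw [Set.disjoint_left]
  rintro x hx hx'
  have h1 := hx i (Set.mem_univ i)
  have h2 := hx' i (Set.mem_univ i)
  -- key inequality: ypt ε k (w i) ≤ xpt ε k' (w' i)
  have hkey : ypt ε k (w i) ≤ xpt ε k' (w' i) := by
    have hjk : (w i : ℝ) ≤ (k : ℝ) - 1 := by
      have : w i + 1 ≤ k := hwi
      have := Nat.cast_le (α := ℝ).2 this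
      push_cast at this; linarith
    rw [ypt, xpt, xpt, if_pos hwi, hw'i, if_neg (lt_irrefl k')]
    have ha : (2 : ℝ) ≤ (k : ℝ) := by exact_mod_cast hk
    have hab : (k : ℝ) + 1 ≤ (k' : ℝ) := by exact_mod_cast hkk'
    have hbs : (k' : ℝ) ≤ (S : ℝ) := by exact_mod_cast hk'S
    have hS0 : (0 : ℝ) < (S : ℝ) := by linarith
    have hεs : ε * (S : ℝ) ^ 2 ≤ 1 := by
      have := (div_le_div_iff₀ (by positivity) (by positivity)).1
        (by simpa using hεS : ε / 1 ≤ 1 / (S : ℝ) ^ 2)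
      linarith
    have hk0 : (0 : ℝ) < (k : ℝ) := by linarith
    have hk'0 : (0 : ℝ) < (k' : ℝ) := by linarith
    set A := (1 + ε) / (k : ℝ) with hAdef
    set B := (1 + ε) / (k' : ℝ) with hBdef
    have hA : A * k = 1 + ε := by rw [hAdef]; field_simp
    have hB : B * k' = 1 + ε := by rw [hBdef]; field_simp
    have hApos : 0 < A := by rw [hAdef]; positivity
    have hεab : ε * ((k : ℝ) * (k' : ℝ)) ≤ 1 := by
      nlinarith [mul_pos hk0 hk'0, mul_le_mul hbs hbs (le_of_lt hk'0) (le_of_lt hS0)]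
    have hAk' : A * k * k' = (1 + ε) * k' := by rw [hA]
    have hBk : B * k' * k = (1 + ε) * k := by rw [hB]
    rw [mul_div_assoc]
    have hwA : (w i : ℝ) * A ≤ ((k : ℝ) - 1) * A :=
      mul_le_mul_of_nonneg_right hjk hApos.le
    nlinarith [hAk', hBk, hεab, hab, hε0, mul_pos hk0 hk'0, hwA, hA]
  exact absurd (h1.2.trans_le hkey) (not_lt.2 h2.1.le)
end

section
/- There is an absolute constant d₀ such that for all d ≥ d₀ there exist subsets F₁,…,F_d of {1,…,d} with |F_k| = ⌈d/2⌉ for every k, and |F_k ∩ F_{k'}| < 7d/26 for all k ≠ k'. -/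
/-!
Instead of the random construction, take a concatenated code. Split the ground set into
`m ≈ √d` blocks of size `2 ^ b`, where `4 ^ b ≈ d`. Inside a block, the Hadamard sets
`{v ∈ 𝔽₂ᵇ | s ⬝ᵥ v = 1}`, `s ≠ 0`, have `2 ^ (b - 1)` elements and meet pairwise in `2 ^ (b - 2)`.
Index the `d` sets by polynomials of degree `< 4` over `𝔽_q`, with `m < q ≤ 2m` prime so that
`q ^ 4 ≥ d`, and let block `j` of a set be the Hadamard set of the `j`-th value of its polynomial.
Distinct polynomials agree in at most three points, so two sets meet in at most
`m 2 ^ (b - 2) + 3 · 2 ^ (b - 1) ≈ d / 4 + O(√d)` elements; padding every set to `⌈d / 2⌉`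
elements costs another `O(√d)`.
-/

open Finset Polynomial

section Hadamard

variable {σ : Type*} [Fintype σ] [DecidableEq σ]

def hadamardSet (s : σ → ZMod 2) : Finset (σ → ZMod 2) := {v | s ⬝ᵥ v = 1}

theorem two_mul_card_hadamardSet {s : σ → ZMod 2} (hs : s ≠ 0) :
    2 * #(hadamardSet s) = 2 ^ Fintype.card σ := by
  obtain ⟨i, hi⟩ := Function.ne_iff.1 hs
  have hsi : s i = 1 := by revert hi; rw [Pi.zero_apply]; generalize s i = x; revert x; decide
  let τ := Equiv.addRight (Pi.single i 1 : σ → ZMod 2)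
  calc 2 * #(hadamardSet s)
      = ∑ v, ((if s ⬝ᵥ v = 1 then 1 else 0) + if s ⬝ᵥ τ v = 1 then 1 else 0) := by
        rw [sum_add_distrib, Equiv.sum_comp τ (fun v => if s ⬝ᵥ v = 1 then (1 : ℕ) else 0),
          ← two_mul, hadamardSet, card_filter]
    _ = ∑ _v : σ → ZMod 2, 1 := by
        refine sum_congr rfl fun v _ => ?_
        simp only [τ, Equiv.coe_addRight, dotProduct_add, dotProduct_single, hsi, mul_one]
        generalize s ⬝ᵥ v = x
        revert x; decide
    _ = 2 ^ Fintype.card σ := by simp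

theorem four_mul_card_hadamardSet_inter {s t : σ → ZMod 2} (hs : s ≠ 0) (ht : t ≠ 0)
    (hst : s ≠ t) : 4 * #(hadamardSet s ∩ hadamardSet t) = 2 ^ Fintype.card σ := by
  have hsum : s + t ≠ 0 := fun h => hst <| funext fun i => by
    have := congrFun h i
    revert this; simp only [Pi.add_apply, Pi.zero_apply]
    generalize s i = x; generalize t i = y; revert x y; decide
  -- over `ZMod 2`, `hadamardSet (s + t)` is the symmetric difference of the other two
  have key : #(hadamardSet s) + #(hadamardSet t) =
      #(hadamardSet (s + t)) + 2 * #(hadamardSet s ∩ hadamardSet t) := by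
    simp only [hadamardSet, ← filter_and, card_filter, mul_sum, ← sum_add_distrib, add_dotProduct]
    refine sum_congr rfl fun v _ => ?_
    generalize s ⬝ᵥ v = x; generalize t ⬝ᵥ v = y
    revert x y; decide
  have h1 := two_mul_card_hadamardSet hs
  have h2 := two_mul_card_hadamardSet ht
  have h3 := two_mul_card_hadamardSet hsum
  omega

end Hadamard

theorem card_filter_eval_eq_lt {K κ : Type*} [Field K] [DecidableEq K] [Fintype κ] {n : ℕ}
    (x : κ ↪ K) {f g : K[X]} (hf : f ∈ degreeLT K n) (hg : g ∈ degreeLT K n) (hfg : f ≠ g) :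
    #{j | f.eval (x j) = g.eval (x j)} < n := by
  by_contra! h
  refine hfg (eq_of_degree_sub_lt_of_eval_finset_eq
    (({j | f.eval (x j) = g.eval (x j)} : Finset κ).map x) ?_ ?_)
  · rw [card_map, ← mem_degreeLT]
    exact degreeLT_mono (by exact_mod_cast h) (Submodule.sub_mem _ hf hg)
  · simp only [mem_map, mem_filter, mem_univ, true_and]
    rintro _ ⟨j, hj, rfl⟩
    exact hj

section Concatenation

variable {ι κ α β : Type*} [Fintype κ] [Fintype β] [DecidableEq β]

theorem card_filter_snd_mem (t : κ → Finset β) :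
    #{p : κ × β | p.2 ∈ t p.1} = ∑ j, #(t j) := by
  rw [card_filter, Fintype.sum_prod_type]
  simp

def concatCode (c : ι → κ → α) (A : α → Finset β) (k : ι) : Finset (κ × β) :=
  {p | p.2 ∈ A (c k p.1)}

variable {c : ι → κ → α} {A : α → Finset β} {h : ℕ}

theorem card_concatCode (hA : ∀ a, #(A a) = h) (k : ι) :
    #(concatCode c A k) = Fintype.card κ * h := by
  rw [concatCode, card_filter_snd_mem (fun j => A (c k j))]
  simp [hA]

theorem card_concatCode_inter_le [DecidableEq κ] [DecidableEq α] {e g : ℕ}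
    (hA : ∀ a, #(A a) = h) (hAA : ∀ a a', a ≠ a' → #(A a ∩ A a') ≤ g) {k k' : ι}
    (hc : #{j | c k j = c k' j} ≤ e) :
    #(concatCode c A k ∩ concatCode c A k') ≤ e * h + Fintype.card κ * g := by
  have hinter : concatCode c A k ∩ concatCode c A k' =
      ({p : κ × β | p.2 ∈ A (c k p.1) ∩ A (c k' p.1)} : Finset (κ × β)) := by
    simp only [concatCode, ← filter_and, mem_inter]
  calc #(concatCode c A k ∩ concatCode c A k')
      = ∑ j, #(A (c k j) ∩ A (c k' j)) := by
        rw [hinter, card_filter_snd_mem (fun j => A (c k j) ∩ A (c k' j))]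
    _ ≤ ∑ j, ((if c k j = c k' j then h else 0) + g) := by
        refine sum_le_sum fun j _ => ?_
        split_ifs with hj
        · exact (card_le_card inter_subset_left).trans ((hA _).trans_le (Nat.le_add_right _ _))
        · exact (hAA _ _ hj).trans (Nat.le_add_left _ _)
    _ = #{j | c k j = c k' j} * h + Fintype.card κ * g := by
        rw [sum_add_distrib, ← sum_filter, sum_const, sum_const, card_univ, smul_eq_mul,
          smul_eq_mul]
    _ ≤ e * h + Fintype.card κ * g := by gcongr

end Concatenation

theorem exists_card_eq_card_inter_le {ι β : Type*} [Fintype β] [DecidableEq β]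
    (G : ι → Finset β) {n p c : ℕ} (hn : n ≤ Fintype.card β) (hG : ∀ k, #(G k) ≤ n)
    (hGp : ∀ k, n ≤ #(G k) + p) (hc : ∀ k k', k ≠ k' → #(G k ∩ G k') ≤ c) :
    ∃ F : ι → Finset β, (∀ k, #(F k) = n) ∧ ∀ k k', k ≠ k' → #(F k ∩ F k') ≤ c + 2 * p := by
  choose F hGF hF using fun k => exists_superset_card_eq (hG k) hn
  have hpad : ∀ k, #(F k \ G k) ≤ p := fun k => by
    rw [card_sdiff_of_subset (hGF k), hF k]; have := hGp k; omega
  refine ⟨F, hF, fun k k' hk => ?_⟩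
  have hsub : F k ∩ F k' ⊆ (G k ∩ G k') ∪ ((F k \ G k) ∪ (F k' \ G k')) := by
    intro x; simp only [mem_inter, mem_union, mem_sdiff]; tauto
  calc #(F k ∩ F k') ≤ #(G k ∩ G k') + (#(F k \ G k) + #(F k' \ G k')) :=
        (card_le_card hsub).trans <| (card_union_le _ _).trans <| by gcongr; exact card_union_le _ _
    _ ≤ c + 2 * p := by have := hc k k' hk; have := hpad k; have := hpad k'; omega

theorem Nat.ceil_natCast_div_two {K : Type*} [Field K] [LinearOrder K] [IsStrictOrderedRing K]
    [FloorSemiring K] (d : ℕ) : ⌈(d : K) / 2⌉₊ = (d + 1) / 2 := by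
  rcases Nat.even_or_odd' d with ⟨c, rfl | rfl⟩
  · rw [show (2 * c + 1) / 2 = c by omega, Nat.cast_mul, Nat.cast_ofNat,
      mul_div_cancel_left₀ _ two_ne_zero, Nat.ceil_natCast]
  · rw [show (2 * c + 1 + 1) / 2 = c + 1 by omega, Nat.ceil_eq_iff (by omega)]
    push_cast
    constructor <;> linarith

theorem exists_sq_pow_two_mem_Ioc {d : ℕ} (hd : d ≠ 0) :
    ∃ b, 2 * d < 2 ^ b * 2 ^ b ∧ 2 ^ b * 2 ^ b ≤ 8 * d := by
  refine ⟨Nat.log 4 (2 * d) + 1, ?_⟩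
  have hlt := Nat.lt_pow_succ_log_self (by norm_num : 1 < 4) (2 * d)
  have hle := Nat.pow_log_le_self 4 (by omega : 2 * d ≠ 0)
  rw [← mul_pow, show 2 * 2 = 4 by rfl]
  rw [pow_succ] at hlt ⊢
  omega

theorem exists_code_params {d : ℕ} (hd : 2 ^ 19 ≤ d) :
    ∃ b m q : ℕ, q.Prime ∧ m < q ∧ q < 2 ^ b ∧ d ≤ q ^ 4 ∧
      m * 2 ^ b ≤ d ∧ d < (m + 1) * 2 ^ b ∧ 200 * 2 ^ b < d := by
  obtain ⟨b, hBlo, hBhi⟩ := exists_sq_pow_two_mem_Ioc (by omega : d ≠ 0)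
  refine ⟨b, ?_⟩
  generalize 2 ^ b = B at hBlo hBhi ⊢
  have hBd : B ≤ d := by nlinarith
  obtain ⟨m, hmB, hdm⟩ : ∃ m, m * B ≤ d ∧ d < (m + 1) * B :=
    ⟨d / B, Nat.div_mul_le_self d B, (Nat.div_lt_iff_lt_mul (by nlinarith)).1 (lt_add_one _)⟩
  obtain ⟨q, hq, hmq, hqm⟩ := Nat.exists_prime_lt_and_le_two_mul m (by rintro rfl; omega)
  refine ⟨m, q, hq, hmq, by nlinarith, ?_, hmB, hdm, by nlinarith⟩
  -- `d < q B` and `B ^ 2 ≤ 8 d` give `d < 8 q ^ 2`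
  have hdq : d < 8 * q ^ 2 := by
    have : d * d < 8 * q ^ 2 * d := by
      calc d * d < (q * B) * (q * B) := by
            have := hdm.trans_le (Nat.mul_le_mul_right B hmq); exact Nat.mul_self_lt_mul_self this
        _ = q ^ 2 * (B * B) := by ring
        _ ≤ 8 * q ^ 2 * d := by nlinarith
    exact Nat.lt_of_mul_lt_mul_right this
  nlinarith

theorem exists_reedSolomon_hadamard_family {d b m q : ℕ} (hq : q.Prime) (hmq : m ≤ q)
    (hqb : q < 2 ^ b) (hdq : d ≤ q ^ 4) :
    ∃ G : Fin d → Finset (Fin m × (Fin b → ZMod 2)),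
      (∀ k, 2 * #(G k) = m * 2 ^ b) ∧
      ∀ k k', k ≠ k' → 4 * #(G k ∩ G k') ≤ m * 2 ^ b + 6 * 2 ^ b := by
  have := Fact.mk hq
  obtain ⟨c, rfl⟩ : ∃ c, b = c + 2 := by
    refine Nat.exists_eq_add_of_le' ?_
    by_contra! hb
    interval_cases b <;> have := hq.two_le <;> omega
  obtain ⟨enc⟩ : Nonempty (Fin d ↪ (Fin 4 → ZMod q)) :=
    Function.Embedding.nonempty_of_card_le (by simpa using hdq)
  obtain ⟨x⟩ : Nonempty (Fin m ↪ ZMod q) :=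
    Function.Embedding.nonempty_of_card_le (by simpa using hmq)
  obtain ⟨sym⟩ : Nonempty (ZMod q ↪ {s : Fin (c + 2) → ZMod 2 // s ≠ 0}) :=
    Function.Embedding.nonempty_of_card_le (by simp [Fintype.card_subtype_compl]; omega)
  let poly : Fin d → (ZMod q)[X] := fun k => (degreeLTEquiv (ZMod q) 4).symm (enc k)
  have poly_mem k : poly k ∈ degreeLT (ZMod q) 4 := Subtype.prop _
  have poly_inj : Function.Injective poly :=
    Subtype.val_injective.comp ((degreeLTEquiv _ 4).symm.injective.comp enc.injective)
  let A a := hadamardSet (sym a : Fin (c + 2) → ZMod 2)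
  have hA a : #(A a) = 2 ^ (c + 1) := by
    have := two_mul_card_hadamardSet (sym a).2
    rw [Fintype.card_fin, pow_succ _ (c + 1)] at this
    simp only [A]
    omega
  have hAA a a' (ha : a ≠ a') : #(A a ∩ A a') ≤ 2 ^ c := by
    have := four_mul_card_hadamardSet_inter (sym a).2 (sym a').2
      (Subtype.val_injective.ne (sym.injective.ne ha))
    rw [Fintype.card_fin, pow_add] at this
    simp only [A]
    omega
  refine ⟨concatCode (fun k j => (poly k).eval (x j)) A, fun k => ?_, fun k k' hk => ?_⟩
  · rw [card_concatCode hA, Fintype.card_fin]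
    ring
  · have hagree : #{j | (poly k).eval (x j) = (poly k').eval (x j)} ≤ 3 :=
      Nat.le_of_lt_succ (card_filter_eval_eq_lt x (poly_mem k) (poly_mem k') (poly_inj.ne hk))
    have := card_concatCode_inter_le (c := fun k j => (poly k).eval (x j)) hA hAA hagree
    rw [Fintype.card_fin] at this
    calc 4 * #(concatCode _ A k ∩ concatCode _ A k') ≤ 4 * (3 * 2 ^ (c + 1) + m * 2 ^ c) := by
          gcongr
      _ = m * 2 ^ (c + 2) + 6 * 2 ^ (c + 2) := by ring

theorem stmt_13 :
    ∃ d₀ : ℕ, ∀ d : ℕ, d₀ ≤ d →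
      ∃ F : Fin d → Finset (Fin d),
        (∀ k, (F k).card = ⌈(d : ℝ) / 2⌉₊) ∧
        (∀ k k', k ≠ k' → ((F k ∩ F k').card : ℝ) < 7 * d / 26) := by
  refine ⟨2 ^ 19, fun d hd => ?_⟩
  obtain ⟨b, m, q, hq, hmq, hqb, hdq, hmd, hdm, hbd⟩ := exists_code_params hd
  obtain ⟨G, hG, hGG⟩ := exists_reedSolomon_hadamard_family hq hmq.le hqb hdq
  obtain ⟨e⟩ : Nonempty (Fin m × (Fin b → ZMod 2) ↪ Fin d) :=
    Function.Embedding.nonempty_of_card_le (by simpa using hmd)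
  rw [add_one_mul] at hdm
  obtain ⟨F, hF, hFF⟩ := exists_card_eq_card_inter_le (fun k => (G k).map e)
    (n := (d + 1) / 2) (p := 2 ^ b) (c := (m * 2 ^ b + 6 * 2 ^ b) / 4) (by simp; omega)
    (fun k => by have := hG k; rw [card_map]; omega)
    (fun k => by have := hG k; rw [card_map]; omega)
    (fun k k' hk => by have := hGG k k' hk; rw [← map_inter, card_map]; omega)
  refine ⟨F, fun k => by rw [hF, Nat.ceil_natCast_div_two], fun k k' hk => ?_⟩
  have := hFF k k' hk
  rw [lt_div_iff₀ (by norm_num)]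
  exact_mod_cast (by omega : #(F k ∩ F k') * 26 < 7 * d)
end
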